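/- For two symmetric simplicial sets Σ^α and Σ^μ, the fundamental groupoid of the product simplicial set Σ^α × Σ^μ is isomorphic to the product of the fundamental groupoids: π₁(Σ^α × Σ^μ) ≅ π₁(Σ^α) × π₁(Σ^μ). Concretely: two paths (p^α, p^μ) and (q^α, q^μ) in the product, with ℓ(p^α)=ℓ(p^μ) and ℓ(q^α)=ℓ(q^μ), are homotopic in the product if and only if p^α ∼ q^α and p^μ ∼ q^μ componentwise. -/

import Mathlib

/-- A (truncated) symmetric simplicial set: vertices, edges and triangles with face maps,
the degeneracy `σ₀` on vertices, and the two degeneracies of edges witnessing that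
degenerate edges can be inserted (these exist in any symmetric simplicial set). -/
structure SymSSet where
  V : Type
  E : Type
  T : Type
  d0 : E → V
  d1 : E → V
  s : V → E
  s_d0 : ∀ v, d0 (s v) = v
  s_d1 : ∀ v, d1 (s v) = v
  f0 : T → E
  f1 : T → E
  f2 : T → E
  c00 : ∀ t, d0 (f0 t) = d0 (f1 t)
  c01 : ∀ t, d1 (f0 t) = d0 (f2 t)
  c11 : ∀ t, d1 (f1 t) = d1 (f2 t)
  degL : E → T
  degL_f0 : ∀ e, f0 (degL e) = s (d0 e)
  degL_f1 : ∀ e, f1 (degL e) = e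
  degL_f2 : ∀ e, f2 (degL e) = e
  degR : E → T
  degR_f0 : ∀ e, f0 (degR e) = e
  degR_f1 : ∀ e, f1 (degR e) = e
  degR_f2 : ∀ e, f2 (degR e) = s (d1 e)

/-- Composability of a word of 1-simplices (leftmost = last edge): `∂₁bᵢ₊₁ = ∂₀bᵢ`. -/
def SymSSet.Composable (S : SymSSet) : List S.E → Prop
  | [] => True
  | [_] => True
  | b :: b' :: t => S.d1 b = S.d0 b' ∧ S.Composable (b' :: t)

/-- Elementary deformation: replace a face `∂₁c` by the pair `∂₀c, ∂₂c` (ampliation), or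
conversely (contraction, via symmetry of the generated equivalence relation). -/
inductive SymSSet.Step (S : SymSSet) : List S.E → List S.E → Prop
  | ampl (l₁ l₂ : List S.E) (c : S.T) :
      SymSSet.Step S (l₁ ++ S.f1 c :: l₂) (l₁ ++ S.f0 c :: S.f2 c :: l₂)

/-- Homotopy of paths: the equivalence relation generated by elementary deformations. -/
def SymSSet.Homotopic (S : SymSSet) (p q : List S.E) : Prop :=
  Relation.EqvGen (SymSSet.Step S) p q

/-- The product of two symmetric simplicial sets. -/
def SymSSet.prod (S T : SymSSet) : SymSSet where
  V := S.V × T.V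
  E := S.E × T.E
  T := S.T × T.T
  d0 e := (S.d0 e.1, T.d0 e.2)
  d1 e := (S.d1 e.1, T.d1 e.2)
  s v := (S.s v.1, T.s v.2)
  s_d0 v := by simp [S.s_d0, T.s_d0]
  s_d1 v := by simp [S.s_d1, T.s_d1]
  f0 t := (S.f0 t.1, T.f0 t.2)
  f1 t := (S.f1 t.1, T.f1 t.2)
  f2 t := (S.f2 t.1, T.f2 t.2)
  c00 t := by simp [S.c00, T.c00]
  c01 t := by simp [S.c01, T.c01]
  c11 t := by simp [S.c11, T.c11]
  degL e := (S.degL e.1, T.degL e.2)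
  degL_f0 e := by simp [S.degL_f0, T.degL_f0]
  degL_f1 e := by simp [S.degL_f1, T.degL_f1]
  degL_f2 e := by simp [S.degL_f2, T.degL_f2]
  degR e := (S.degR e.1, T.degR e.2)
  degR_f0 e := by simp [S.degR_f0, T.degR_f0]
  degR_f1 e := by simp [S.degR_f1, T.degR_f1]
  degR_f2 e := by simp [S.degR_f2, T.degR_f2]

/-!
Every composable path in the product is homotopic to its staircase: the `S`-component run at the
initial `T`-vertex, followed by the `T`-component run at the final `S`-vertex. The only
two-dimensional input is that a product edge `(x, y)` is the diagonal of a square with sides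
`(x, σ∂₀y), (σ∂₁x, y)` and `(σ∂₀x, y), (x, σ∂₁y)`, which lets vertical edges slide past horizontal
ones. Homotopies of the components lift to horizontal and vertical paths, and homotopic paths have
the same endpoints, so componentwise homotopic paths have homotopic staircases.
-/

theorem Relation.EqvGen.map {α β : Type*} {r : α → α → Prop} {r' : β → β → Prop} (f : α → β)
    (hf : ∀ a b, r a b → r' (f a) (f b)) {a b : α} (h : Relation.EqvGen r a b) :
    Relation.EqvGen r' (f a) (f b) := by
  induction h with
  | rel a b hab => exact .rel _ _ (hf a b hab)
  | refl a => exact .refl _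
  | symm a b _ ih => exact .symm _ _ ih
  | trans a b c _ _ ih₁ ih₂ => exact .trans _ _ _ ih₁ ih₂

namespace SymSSet

variable {S S' T : SymSSet}

@[simp] theorem prod_f0_mk (a : S.T) (b : T.T) : (S.prod T).f0 (a, b) = (S.f0 a, T.f0 b) := rfl

@[simp] theorem prod_f1_mk (a : S.T) (b : T.T) : (S.prod T).f1 (a, b) = (S.f1 a, T.f1 b) := rfl

@[simp] theorem prod_f2_mk (a : S.T) (b : T.T) : (S.prod T).f2 (a, b) = (S.f2 a, T.f2 b) := rfl

theorem Homotopic.refl (p : List S.E) : S.Homotopic p p := Relation.EqvGen.refl p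

theorem Homotopic.symm {p q : List S.E} (h : S.Homotopic p q) : S.Homotopic q p :=
  Relation.EqvGen.symm _ _ h

theorem Homotopic.trans {p q r : List S.E} (h : S.Homotopic p q) (h' : S.Homotopic q r) :
    S.Homotopic p r :=
  Relation.EqvGen.trans _ _ _ h h'

theorem Homotopic.of_step {p q : List S.E} (h : S.Step p q) : S.Homotopic p q :=
  Relation.EqvGen.rel _ _ h

theorem Homotopic.append_left (l : List S.E) {p q : List S.E} (h : S.Homotopic p q) :
    S.Homotopic (l ++ p) (l ++ q) :=
  h.map (l ++ ·) fun _ _ ⟨l₁, l₂, c⟩ => by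
    simpa only [List.append_assoc] using Step.ampl (l ++ l₁) l₂ c

theorem Homotopic.append_right {p q : List S.E} (h : S.Homotopic p q) (l : List S.E) :
    S.Homotopic (p ++ l) (q ++ l) :=
  h.map (· ++ l) fun _ _ ⟨l₁, l₂, c⟩ => by
    simpa only [List.append_assoc, List.cons_append] using Step.ampl l₁ (l₂ ++ l) c

theorem Homotopic.append {p q p' q' : List S.E} (h : S.Homotopic p q) (h' : S.Homotopic p' q') :
    S.Homotopic (p ++ p') (q ++ q') :=
  (h.append_right p').trans (h'.append_left q)

theorem Homotopic.eq_nil_iff {p q : List S.E} (h : S.Homotopic p q) : p = [] ↔ q = [] := by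
  induction h with
  | rel a b hab => obtain ⟨l₁, l₂, c⟩ := hab; simp
  | refl a => rfl
  | symm a b _ ih => exact ih.symm
  | trans a b c _ _ ih₁ ih₂ => exact ih₁.trans ih₂

theorem Homotopic.map (f : S.E → S'.E) (g : S.T → S'.T) (h₀ : ∀ c, S'.f0 (g c) = f (S.f0 c))
    (h₁ : ∀ c, S'.f1 (g c) = f (S.f1 c)) (h₂ : ∀ c, S'.f2 (g c) = f (S.f2 c))
    {p q : List S.E} (h : S.Homotopic p q) : S'.Homotopic (p.map f) (q.map f) :=
  Relation.EqvGen.map (List.map f) (fun _ _ ⟨l₁, l₂, c⟩ => by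
    simpa [h₀, h₁, h₂] using Step.ampl (l₁.map f) (l₂.map f) (g c)) h

def IsPath (S : SymSSet) : List S.E → S.V → S.V → Prop
  | [], u, v => u = v
  | e :: p, u, v => S.d0 e = u ∧ S.IsPath p (S.d1 e) v

theorem Composable.exists_isPath {e : S.E} {p : List S.E} (h : S.Composable (e :: p)) :
    ∃ v, S.IsPath (e :: p) (S.d0 e) v := by
  induction p generalizing e with
  | nil => exact ⟨S.d1 e, rfl, rfl⟩
  | cons e' p ih =>
    obtain ⟨he, hp⟩ := h
    obtain ⟨v, hv⟩ := ih hp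
    exact ⟨v, rfl, he ▸ hv⟩

theorem isPath_append {p q : List S.E} {u v : S.V} :
    S.IsPath (p ++ q) u v ↔ ∃ m, S.IsPath p u m ∧ S.IsPath q m v := by
  induction p generalizing u with
  | nil => simp [IsPath]
  | cons e p ih => simp [IsPath, ih, and_assoc]

theorem Step.isPath_iff {p q : List S.E} (h : S.Step p q) {u v : S.V} :
    S.IsPath p u v ↔ S.IsPath q u v := by
  obtain ⟨l₁, l₂, c⟩ := h
  simp [isPath_append, IsPath, S.c00, S.c01, S.c11]

theorem Homotopic.isPath_iff {p q : List S.E} (h : S.Homotopic p q) {u v : S.V} :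
    S.IsPath p u v ↔ S.IsPath q u v := by
  induction h with
  | rel a b hab => exact hab.isPath_iff
  | refl a => rfl
  | symm a b _ ih => exact ih.symm
  | trans a b c _ _ ih₁ ih₂ => exact ih₁.trans ih₂

theorem isPath_prod_iff {p : List (S.E × T.E)} {u v : (S.prod T).V} :
    (S.prod T).IsPath p u v ↔
      S.IsPath (p.map Prod.fst) u.1 v.1 ∧ T.IsPath (p.map Prod.snd) u.2 v.2 := by
  induction p generalizing u with
  | nil => exact Prod.ext_iff
  | cons e p ih =>
    change (S.prod T).d0 e = u ∧ (S.prod T).IsPath p ((S.prod T).d1 e) v ↔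
      (S.d0 e.1 = u.1 ∧ S.IsPath (p.map Prod.fst) (S.d1 e.1) v.1) ∧
        (T.d0 e.2 = u.2 ∧ T.IsPath (p.map Prod.snd) (T.d1 e.2) v.2)
    rw [ih]
    exact ⟨fun ⟨h₀, h₁, h₂⟩ => ⟨⟨congrArg Prod.fst h₀, h₁⟩, congrArg Prod.snd h₀, h₂⟩,
      fun ⟨⟨h₀, h₁⟩, h₀', h₂⟩ => ⟨Prod.ext h₀ h₀', h₁, h₂⟩⟩

theorem Homotopic.map_fst {p q : List (S.E × T.E)} (h : (S.prod T).Homotopic p q) :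
    S.Homotopic (p.map Prod.fst) (q.map Prod.fst) :=
  h.map Prod.fst Prod.fst (fun _ => rfl) (fun _ => rfl) (fun _ => rfl)

theorem Homotopic.map_snd {p q : List (S.E × T.E)} (h : (S.prod T).Homotopic p q) :
    T.Homotopic (p.map Prod.snd) (q.map Prod.snd) :=
  h.map Prod.snd Prod.snd (fun _ => rfl) (fun _ => rfl) (fun _ => rfl)

def horizontal (p : List S.E) (w : T.V) : List (S.E × T.E) := p.map (·, T.s w)

def vertical (v : S.V) (p : List T.E) : List (S.E × T.E) := p.map (S.s v, ·)

theorem Homotopic.horizontal {p q : List S.E} (h : S.Homotopic p q) (w : T.V) :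
    (S.prod T).Homotopic (horizontal p w) (horizontal q w) :=
  h.map (S' := S.prod T) (·, T.s w) (·, T.degR (T.s w))
    (fun _ => Prod.ext rfl (T.degR_f0 _)) (fun _ => Prod.ext rfl (T.degR_f1 _))
    (fun _ => Prod.ext rfl ((T.degR_f2 _).trans (congrArg T.s (T.s_d1 w))))

theorem Homotopic.vertical {p q : List T.E} (h : T.Homotopic p q) (v : S.V) :
    (S.prod T).Homotopic (vertical v p) (vertical v q) :=
  h.map (S' := S.prod T) (S.s v, ·) (S.degR (S.s v), ·)
    (fun _ => Prod.ext (S.degR_f0 _) rfl) (fun _ => Prod.ext (S.degR_f1 _) rfl)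
    (fun _ => Prod.ext ((S.degR_f2 _).trans (congrArg S.s (S.s_d1 v))) rfl)

theorem homotopic_horizontal_vertical (x : S.E) (y : T.E) :
    (S.prod T).Homotopic [(x, y)] [(x, T.s (T.d0 y)), (S.s (S.d1 x), y)] := by
  simpa [S.degR_f0, S.degR_f1, S.degR_f2, T.degL_f0, T.degL_f1, T.degL_f2] using
    Homotopic.of_step (Step.ampl (S := S.prod T) [] [] (S.degR x, T.degL y))

theorem homotopic_vertical_horizontal (x : S.E) (y : T.E) :
    (S.prod T).Homotopic [(x, y)] [(S.s (S.d0 x), y), (x, T.s (T.d1 y))] := by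
  simpa [S.degL_f0, S.degL_f1, S.degL_f2, T.degR_f0, T.degR_f1, T.degR_f2] using
    Homotopic.of_step (Step.ampl (S := S.prod T) [] [] (S.degL x, T.degR y))

theorem homotopic_slide_vertical (y : T.E) {p : List S.E} {u v : S.V} (hp : S.IsPath p u v)
    (l : List (S.E × T.E)) :
    (S.prod T).Homotopic ((S.s u, y) :: (horizontal p (T.d1 y) ++ l))
      (horizontal p (T.d0 y) ++ (S.s v, y) :: l) := by
  induction p generalizing u with
  | nil =>
    subst hp
    exact Homotopic.refl _
  | cons x p ih =>
    obtain ⟨rfl, hp⟩ := hp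
    have square : (S.prod T).Homotopic [(S.s (S.d0 x), y), (x, T.s (T.d1 y))]
        [(x, T.s (T.d0 y)), (S.s (S.d1 x), y)] :=
      (homotopic_vertical_horizontal x y).symm.trans (homotopic_horizontal_vertical x y)
    exact (square.append_right (horizontal p (T.d1 y) ++ l)).trans
      ((ih hp).append_left [(x, T.s (T.d0 y))])

theorem homotopic_staircase {p : List (S.E × T.E)} {u v : S.V} {w w' : T.V}
    (hS : S.IsPath (p.map Prod.fst) u v) (hT : T.IsPath (p.map Prod.snd) w w') :
    (S.prod T).Homotopic p (horizontal (p.map Prod.fst) w ++ vertical v (p.map Prod.snd)) := by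
  induction p generalizing u w with
  | nil => exact Homotopic.refl _
  | cons e p ih =>
    obtain ⟨-, hS⟩ := hS
    obtain ⟨rfl, hT⟩ := hT
    exact ((ih hS hT).append_left [e]).trans
      (((homotopic_horizontal_vertical e.1 e.2).append_right _).trans
        ((homotopic_slide_vertical e.2 hS (vertical v (p.map Prod.snd))).append_left
          [(e.1, T.s (T.d0 e.2))]))

end SymSSet

theorem stmt6_general (S T : SymSSet) (p q : List (SymSSet.prod S T).E)
    (hpc : (SymSSet.prod S T).Composable p) :
    (SymSSet.prod S T).Homotopic p q ↔
      S.Homotopic (p.map Prod.fst) (q.map Prod.fst) ∧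
        T.Homotopic (p.map Prod.snd) (q.map Prod.snd) := by
  refine ⟨fun h => ⟨h.map_fst, h.map_snd⟩, fun ⟨hS, hT⟩ => ?_⟩
  rcases p with _ | ⟨e, p⟩
  · obtain rfl : q = [] := List.map_eq_nil_iff.1 (hS.eq_nil_iff.1 rfl)
    exact SymSSet.Homotopic.refl _
  obtain ⟨v, hp⟩ := hpc.exists_isPath
  obtain ⟨hpS, hpT⟩ := SymSSet.isPath_prod_iff.1 hp
  have hqS := hS.isPath_iff.1 hpS
  have hqT := hT.isPath_iff.1 hpT
  exact (SymSSet.homotopic_staircase hpS hpT).trans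
    (((hS.horizontal _).append (hT.vertical _)).trans (SymSSet.homotopic_staircase hqS hqT).symm)

/-- The fundamental groupoid of a product of symmetric simplicial sets is the product of the
fundamental groupoids. Concretely: two (nonempty, composable) paths in the product simplicial
set are homotopic if and only if their two components are homotopic. -/
theorem stmt6 (S T : SymSSet) (p q : List (SymSSet.prod S T).E)
    (hp : p ≠ []) (hq : q ≠ [])
    (hpc : (SymSSet.prod S T).Composable p) (hqc : (SymSSet.prod S T).Composable q) :
    (SymSSet.prod S T).Homotopic p q ↔
      S.Homotopic (p.map Prod.fst) (q.map Prod.fst) ∧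
        T.Homotopic (p.map Prod.snd) (q.map Prod.snd) :=
  stmt6_general S T p q hpc
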